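/- Let H be the connected graph on n vertices that is the union of a complete graph K_m on vertices v_{α_1},…,v_{α_m} (m < n) and star graphs centered at vertices of K_m, each star meeting K_m only in its center, distinct stars being otherwise vertex-disjoint, and the leaves of the stars being exactly the n − m vertices outside K_m. Then the Castelnuovo–Mumford regularity of R/I_c(H) equals max_{1≤i≤m} deg_H(v_{α_i}) − 1, where deg_H(v_{α_i}) is the degree in H of the K_m-vertex v_{α_i}. -/

import Mathlib

/-!
`H` is a split graph: `A` is a clique and a vertex cover. Take a vertex cover `C₀ ⊆ A` with
`|C₀| ≤ deg a` for all `a ∈ C₀` (`A` itself, or `A` minus a centre without leaves). A vertex cover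
either contains `C₀` or misses some `a ∈ C₀` and then contains its neighbourhood `N(a)`, so `I_c(H)`
is minimally generated by `x_{C₀}` and the `x_{N(a)}`, `a ∈ C₀`. Since `X_a x_{N(a)}` is a multiple
of `x_{C₀}` while `X_a` divides every other generator, these `|C₀|` relations form a basis of the
syzygies, and `0 → ⊕_{a ∈ C₀} R(-deg a - 1) → R(-|C₀|) ⊕ ⊕_{a ∈ C₀} R(-deg a) → R` is the minimal
resolution; its regularity is `max deg a - 1`.
-/

open MvPolynomial Finset

/-- A set of vertices is a vertex cover if it meets every edge. -/
def IsVertexCover {V : Type*} (G : SimpleGraph V) (C : Set V) : Prop :=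
  ∀ ⦃u v : V⦄, G.Adj u v → u ∈ C ∨ v ∈ C

/-- The ideal of vertex covers of a graph on `Fin n`. -/
noncomputable def coverIdeal (K : Type*) [Field K] {n : ℕ} (G : SimpleGraph (Fin n)) :
    Ideal (MvPolynomial (Fin n) K) :=
  Ideal.span { p | ∃ C : Finset (Fin n), IsVertexCover G ↑C ∧ p = ∏ i ∈ C, X i }

/-- The edge ideal of a graph on `Fin n`. -/
noncomputable def edgeIdeal (K : Type*) [Field K] {n : ℕ} (G : SimpleGraph (Fin n)) :
    Ideal (MvPolynomial (Fin n) K) :=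
  Ideal.span { p | ∃ u v : Fin n, G.Adj u v ∧ p = X u * X v }

/-- `p` is a minimal monomial generator of the monomial ideal `I`:
it is a monomial in `I` none of whose proper monomial divisors lies in `I`. -/
def IsMinimalMonomialGen {K : Type*} [Field K] {n : ℕ}
    (I : Ideal (MvPolynomial (Fin n) K)) (p : MvPolynomial (Fin n) K) : Prop :=
  ∃ a : Fin n →₀ ℕ, p = monomial a (1 : K) ∧ p ∈ I ∧
    ∀ b : Fin n →₀ ℕ, b ≤ a → b ≠ a → monomial b (1 : K) ∉ I

/-- The maximal graded ideal (X_1, …, X_n) of the polynomial ring. -/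
noncomputable def gradedMaxIdeal (K : Type*) [Field K] (n : ℕ) :
    Ideal (MvPolynomial (Fin n) K) :=
  Ideal.span (Set.range X)

/-- The set of lengths of regular sequences on `R/I` consisting of elements of the
maximal graded ideal; its greatest element is the depth of `R/I`. -/
def depthSet (K : Type*) [Field K] {n : ℕ} (I : Ideal (MvPolynomial (Fin n) K)) : Set ℕ :=
  {k | ∃ rs : List (MvPolynomial (Fin n) K), rs.length = k ∧
    (∀ r ∈ rs, r ∈ gradedMaxIdeal K n) ∧
    RingTheory.Sequence.IsRegular (MvPolynomial (Fin n) K ⧸ I) rs}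

/-- A minimal graded free resolution of `R/I`:
`⋯ → F₂ → F₁ → F₀ = R → R/I → 0`, where `F_{j+1}` is free of rank `rk j` with
generator degrees `dgr j`, the map `F₁ → R` is given by the row `g` (whose image is `I`),
and the map `F_{j+2} → F_{j+1}` is given by the matrix `M j`.  All matrix entries are
homogeneous of the appropriate degree and lie in the maximal graded ideal (minimality),
and the complex is exact at every `F_{j}`, `j ≥ 1`. -/
def IsMinimalGradedFreeResolution {K : Type*} [Field K] {n : ℕ}
    (I : Ideal (MvPolynomial (Fin n) K))
    (rk : ℕ → ℕ) (dgr : ∀ j : ℕ, Fin (rk j) → ℕ)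
    (g : Fin (rk 0) → MvPolynomial (Fin n) K)
    (M : ∀ j : ℕ, Matrix (Fin (rk j)) (Fin (rk (j + 1))) (MvPolynomial (Fin n) K)) : Prop :=
  Ideal.span (Set.range g) = I ∧
  (∀ i, (g i).IsHomogeneous (dgr 0 i)) ∧
  (∀ i, constantCoeff (g i) = 0) ∧
  (∀ (j : ℕ) (k : Fin (rk j)) (i : Fin (rk (j + 1))),
      (M j k i).IsHomogeneous (dgr (j + 1) i - dgr j k)) ∧
  (∀ (j : ℕ) (k : Fin (rk j)) (i : Fin (rk (j + 1))),
      dgr (j + 1) i ≤ dgr j k → M j k i = 0) ∧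
  LinearMap.ker (Fintype.linearCombination (MvPolynomial (Fin n) K) g)
    = LinearMap.range (M 0).mulVecLin ∧
  (∀ j : ℕ, LinearMap.ker (M j).mulVecLin = LinearMap.range (M (j + 1)).mulVecLin)

namespace MvPolynomial

variable {σ R : Type*} [CommRing R]

theorem X_dvd_prod_X_iff [IsDomain R] {a : σ} {t : Finset σ} :
    (X a : MvPolynomial σ R) ∣ ∏ v ∈ t, X v ↔ a ∈ t := by
  refine ⟨fun h => ?_, fun h => Finset.dvd_prod_of_mem _ h⟩
  obtain ⟨v, hv, hav⟩ := (X_prime.dvd_finsetProd_iff _).1 h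
  rwa [X_dvd_X.1 hav]

theorem isHomogeneous_prod_X (t : Finset σ) :
    (∏ v ∈ t, X v : MvPolynomial σ R).IsHomogeneous t.card := by
  simpa using IsHomogeneous.prod t _ (fun _ => 1) fun v _ => isHomogeneous_X R v

theorem IsHomogeneous.constantCoeff_eq_zero {φ : MvPolynomial σ R} {n : ℕ}
    (hφ : φ.IsHomogeneous n) (hn : n ≠ 0) : constantCoeff φ = 0 := by
  rw [constantCoeff_eq]
  exact hφ.coeff_eq_zero (by simpa using hn.symm)

end MvPolynomial

section Syzygy

open Matrix

variable {R : Type*} [CommRing R] {c : ℕ}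

/-- Its columns are the syzygies `x i • e (i + 1) - y i • e 0`. -/
def syzygyMatrix (x y : Fin c → R) : Matrix (Fin (c + 1)) (Fin c) R :=
  of (vecCons (-y) (of.symm (diagonal x)))

@[simp]
theorem syzygyMatrix_zero (x y : Fin c → R) (i : Fin c) : syzygyMatrix x y 0 i = -y i :=
  rfl

@[simp]
theorem syzygyMatrix_succ (x y : Fin c → R) (k i : Fin c) :
    syzygyMatrix x y k.succ i = diagonal x k i :=
  rfl

theorem syzygyMatrix_mulVec (x y v : Fin c → R) :
    syzygyMatrix x y *ᵥ v = vecCons (-(y ⬝ᵥ v)) fun i => x i * v i := by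
  rw [syzygyMatrix, cons_mulVec, neg_dotProduct]
  congr 1
  exact funext (mulVec_diagonal x v)

variable [IsDomain R] {x y : Fin c → R}

theorem ker_syzygyMatrix_mulVecLin (hx : ∀ i, x i ≠ 0) :
    LinearMap.ker (syzygyMatrix x y).mulVecLin = ⊥ := by
  refine LinearMap.ker_eq_bot'.2 fun v hv => funext fun i => ?_
  have := congrFun hv i.succ
  simp only [mulVecLin_apply, syzygyMatrix_mulVec, cons_val_succ, Pi.zero_apply] at this
  exact (mul_eq_zero.1 this).resolve_left (hx i)

/-- If `x i` divides every generator except `g (i+1)`, a syzygy must have its `(i+1)`-st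
coordinate divisible by `x i`; subtracting multiples of the columns then leaves a multiple
of `e 0`, which vanishes because `g 0 ≠ 0`. -/
theorem ker_linearCombination_eq_range_syzygyMatrix {g : Fin (c + 1) → R} (hg₀ : g 0 ≠ 0)
    (hrel : ∀ i, x i * g i.succ = y i * g 0) (hx : ∀ i, Prime (x i))
    (hdvd : ∀ i k, k ≠ i.succ → x i ∣ g k) (hndvd : ∀ i, ¬ x i ∣ g i.succ) :
    LinearMap.ker (Fintype.linearCombination R g) =
      LinearMap.range (syzygyMatrix x y).mulVecLin := by
  ext w
  simp only [LinearMap.mem_ker, Fintype.linearCombination_apply, smul_eq_mul,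
    LinearMap.mem_range, mulVecLin_apply]
  constructor
  · intro hw
    have hxw : ∀ i, x i ∣ w i.succ := by
      intro i
      have hsplit := Finset.add_sum_erase _ (fun k => w k * g k) (Finset.mem_univ i.succ)
      rw [hw] at hsplit
      have : x i ∣ w i.succ * g i.succ := by
        rw [eq_neg_of_add_eq_zero_left hsplit, dvd_neg]
        exact Finset.dvd_sum fun k hk =>
          dvd_mul_of_dvd_right (hdvd i k (Finset.ne_of_mem_erase hk)) _
      exact ((hx i).dvd_or_dvd this).resolve_right (hndvd i)
    choose v hv using hxw
    have hw₀ : w 0 = -(y ⬝ᵥ v) := by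
      have : (w 0 + y ⬝ᵥ v) * g 0 = 0 := by
        rw [← hw, Fin.sum_univ_succ, add_mul, dotProduct, Finset.sum_mul]
        congr 1
        refine Finset.sum_congr rfl fun i _ => ?_
        rw [hv]
        linear_combination -v i * hrel i
      exact eq_neg_of_add_eq_zero_left ((mul_eq_zero.1 this).resolve_right hg₀)
    refine ⟨v, funext fun k => Fin.cases ?_ (fun i => ?_) k⟩
    · simp [syzygyMatrix_mulVec, hw₀]
    · simp [syzygyMatrix_mulVec, hv]
  · rintro ⟨v, rfl⟩
    simp only [syzygyMatrix_mulVec, Fin.sum_univ_succ, cons_val_zero, cons_val_succ,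
      dotProduct]
    rw [neg_mul, neg_add_eq_zero, Finset.sum_mul]
    exact Finset.sum_congr rfl fun i _ => by linear_combination -v i * hrel i

end Syzygy

namespace SyzygyComplex

/-- `rank c j` is the rank of `F_{j+1}` in `0 → R^c → R^(c+1) → R`. -/
abbrev rank (c : ℕ) : ℕ → ℕ
  | 0 => c + 1
  | 1 => c
  | _ + 2 => 0

abbrev degree {c : ℕ} (d : Fin (c + 1) → ℕ) : ∀ j, Fin (rank c j) → ℕ
  | 0 => d
  | 1 => fun i => d i.succ + 1
  | _ + 2 => fun _ => 0

abbrev differential {R : Type*} [CommRing R] {c : ℕ} (x y : Fin c → R) :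
    ∀ j, Matrix (Fin (rank c j)) (Fin (rank c (j + 1))) R
  | 0 => syzygyMatrix x y
  | _ + 1 => 0

variable {K : Type*} [Field K] {n c : ℕ} {g : Fin (c + 1) → MvPolynomial (Fin n) K}
  {x y : Fin c → MvPolynomial (Fin n) K}

theorem isMinimalGradedFreeResolution {I : Ideal (MvPolynomial (Fin n) K)} {d : Fin (c + 1) → ℕ}
    (hspan : Ideal.span (Set.range g) = I) (hg : ∀ k, (g k).IsHomogeneous (d k))
    (hd₀ : d 0 ≠ 0) (hd : ∀ i : Fin c, d 0 ≤ d i.succ) (hx : ∀ i, (x i).IsHomogeneous 1)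
    (hy : ∀ i, (y i).IsHomogeneous (d i.succ + 1 - d 0)) (hg₀ : g 0 ≠ 0)
    (hrel : ∀ i, x i * g i.succ = y i * g 0) (hxp : ∀ i, Prime (x i))
    (hdvd : ∀ i k, k ≠ i.succ → x i ∣ g k) (hndvd : ∀ i, ¬ x i ∣ g i.succ) :
    IsMinimalGradedFreeResolution I (rank c) (degree d) g (differential x y) := by
  refine ⟨hspan, hg, fun k => (hg k).constantCoeff_eq_zero ?_, ?_, ?_,
    ker_linearCombination_eq_range_syzygyMatrix hg₀ hrel hxp hdvd hndvd, ?_⟩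
  · refine Fin.cases hd₀ (fun i => ?_) k
    have := hd i
    omega
  · rintro (_ | _ | j) k i
    · refine Fin.cases ?_ (fun k => ?_) k
      · exact (hy i).neg
      · by_cases hki : k = i
        · subst hki
          simpa using hx k
        · simpa [hki] using isHomogeneous_zero _ _ _
    · exact i.elim0
    · exact k.elim0
  · rintro (_ | _ | j) k i hle
    · revert hle
      refine Fin.cases (fun hle => ?_) (fun k hle => ?_) k
      · exact absurd hle (by have := hd i; simp only [degree]; omega)
      · by_cases hki : k = i
        · subst hki
          simp at hle
        · simp [hki]
    · exact i.elim0
    · exact k.elim0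
  · rintro (_ | j)
    · rw [differential, ker_syzygyMatrix_mulVecLin fun i => (hxp i).ne_zero]
      simp
    · exact Subsingleton.elim _ _

end SyzygyComplex

section VertexCover

variable {V : Type*} {G : SimpleGraph V}

theorem IsVertexCover.neighborSet_subset {C : Set V} (hC : IsVertexCover G C) {a : V}
    (ha : a ∉ C) : G.neighborSet a ⊆ C :=
  fun _ hw => (hC hw).resolve_left ha

theorem IsVertexCover.diff_singleton {C : Set V} (hC : IsVertexCover G C) {b : V}
    (hb : G.neighborSet b ⊆ C) : IsVertexCover G (C \ {b}) := by
  intro u v huv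
  by_cases hu : u = b
  · subst hu
    exact Or.inr ⟨hb huv, huv.ne'⟩
  by_cases hv : v = b
  · subst hv
    exact Or.inl ⟨hb huv.symm, huv.ne⟩
  exact (hC huv).imp (fun h => ⟨h, hu⟩) fun h => ⟨h, hv⟩

theorem isVertexCover_neighborSet_of_isClique {A : Set V} (hA : G.IsClique A)
    (hcov : IsVertexCover G A) {a : V} (ha : a ∈ A) : IsVertexCover G (G.neighborSet a) := by
  intro u v huv
  by_cases hu : u = a
  · exact Or.inr (hu ▸ huv)
  by_cases hv : v = a
  · exact Or.inl (hv ▸ huv.symm)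
  exact (hcov huv).imp (fun h => hA ha h (Ne.symm hu)) fun h => hA ha h (Ne.symm hv)

theorem SimpleGraph.IsClique.erase_subset_neighborFinset [Fintype V] [DecidableEq V]
    [DecidableRel G.Adj] {A : Finset V} (hA : G.IsClique (A : Set V)) {a : V} (ha : a ∈ A) :
    A.erase a ⊆ G.neighborFinset a := fun _ hb =>
  (G.mem_neighborFinset _ _).2 (hA ha (Finset.mem_of_mem_erase hb) (Finset.ne_of_mem_erase hb).symm)

theorem SimpleGraph.IsClique.card_erase_le_degree [Fintype V] [DecidableEq V]
    [DecidableRel G.Adj] {A : Finset V} (hA : G.IsClique (A : Set V)) {a : V} (ha : a ∈ A) :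
    (A.erase a).card ≤ G.degree a :=
  Finset.card_le_card (hA.erase_subset_neighborFinset ha)

theorem SimpleGraph.IsClique.card_le_degree_of_adj [Fintype V] [DecidableEq V]
    [DecidableRel G.Adj] {A : Finset V} (hA : G.IsClique (A : Set V)) {a v : V} (ha : a ∈ A)
    (hv : v ∉ A) (hadj : G.Adj a v) : A.card ≤ G.degree a := by
  have hssub : A.erase a ⊂ G.neighborFinset a :=
    (Finset.ssubset_iff_of_subset (hA.erase_subset_neighborFinset ha)).2
      ⟨v, (G.mem_neighborFinset _ _).2 hadj, fun h => hv (Finset.mem_of_mem_erase h)⟩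
  rw [← Finset.card_erase_add_one ha]
  exact Finset.card_lt_card hssub

theorem SimpleGraph.ncard_neighborSet_eq_degree (G : SimpleGraph V) (v : V)
    [Fintype (G.neighborSet v)] : (G.neighborSet v).ncard = G.degree v := by
  rw [← card_neighborFinset_eq_degree, ← Set.ncard_coe_finset, coe_neighborFinset]

end VertexCover

theorem coverIdeal_eq_span {K : Type*} [Field K] {n : ℕ} {G : SimpleGraph (Fin n)} {ι : Type*}
    (C : ι → Finset (Fin n)) (hC : ∀ i, IsVertexCover G (C i))
    (hmin : ∀ D : Finset (Fin n), IsVertexCover G D → ∃ i, C i ⊆ D) :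
    coverIdeal K G = Ideal.span (Set.range fun i => ∏ v ∈ C i, X v) := by
  apply le_antisymm
  · refine Ideal.span_le.2 ?_
    rintro _ ⟨D, hD, rfl⟩
    obtain ⟨i, hi⟩ := hmin D hD
    exact Ideal.mem_of_dvd _ (Finset.prod_dvd_prod_of_subset _ _ _ hi)
      (Ideal.subset_span ⟨i, rfl⟩)
  · refine Ideal.span_le.2 ?_
    rintro _ ⟨i, rfl⟩
    exact Ideal.subset_span ⟨C i, hC i, rfl⟩

section CliqueCover

variable {K : Type*} [Field K] {n : ℕ} {H : SimpleGraph (Fin n)} [DecidableRel H.Adj]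
  {C₀ : Finset (Fin n)}

noncomputable def cliqueCovers (H : SimpleGraph (Fin n)) [DecidableRel H.Adj]
    (C₀ : Finset (Fin n)) : Fin (C₀.card + 1) → Finset (Fin n) :=
  Fin.cons C₀ fun i => H.neighborFinset (C₀.equivFin.symm i)

@[simp]
theorem cliqueCovers_zero : cliqueCovers H C₀ 0 = C₀ :=
  rfl

@[simp]
theorem cliqueCovers_succ (i : Fin C₀.card) :
    cliqueCovers H C₀ i.succ = H.neighborFinset (C₀.equivFin.symm i) :=
  rfl

theorem coverIdeal_eq_span_cliqueCovers (hclique : H.IsClique (C₀ : Set (Fin n)))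
    (hcover : IsVertexCover H C₀) :
    coverIdeal K H = Ideal.span (Set.range fun k => ∏ v ∈ cliqueCovers H C₀ k, X v) := by
  have hcovers (k) : IsVertexCover H (cliqueCovers H C₀ k) := by
    refine Fin.cases hcover (fun i => ?_) k
    rw [cliqueCovers_succ, SimpleGraph.coe_neighborFinset]
    exact isVertexCover_neighborSet_of_isClique hclique hcover (C₀.equivFin.symm i).2
  refine coverIdeal_eq_span _ hcovers fun D hD => ?_
  by_cases hsub : C₀ ⊆ D
  · exact ⟨0, hsub⟩
  obtain ⟨a, ha, haD⟩ := Finset.not_subset.1 hsub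
  refine ⟨(C₀.equivFin ⟨a, ha⟩).succ, ?_⟩
  rw [cliqueCovers_succ, Equiv.symm_apply_apply, ← Finset.coe_subset,
    SimpleGraph.coe_neighborFinset]
  exact hD.neighborSet_subset (by simpa using haD)

theorem coe_equivFin_symm_mem_cliqueCovers_iff (hclique : H.IsClique (C₀ : Set (Fin n)))
    (i : Fin C₀.card) (k : Fin (C₀.card + 1)) :
    (C₀.equivFin.symm i : Fin n) ∈ cliqueCovers H C₀ k ↔ k ≠ i.succ := by
  refine Fin.cases (by simpa using (Fin.succ_ne_zero i).symm) (fun k => ?_) k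
  rw [cliqueCovers_succ, SimpleGraph.mem_neighborFinset, ne_eq, Fin.succ_inj]
  refine ⟨fun hadj hki => hadj.ne (by rw [hki]), fun hki => ?_⟩
  exact hclique (C₀.equivFin.symm k).2 (C₀.equivFin.symm i).2
    fun h => hki (C₀.equivFin.symm.injective (Subtype.ext h))

theorem isMinimalGradedFreeResolution_cliqueCovers (hclique : H.IsClique (C₀ : Set (Fin n)))
    (hcover : IsVertexCover H C₀) (hne : C₀.Nonempty)
    (hdeg : ∀ a ∈ C₀, C₀.card ≤ H.degree a) :
    IsMinimalGradedFreeResolution (coverIdeal K H) (SyzygyComplex.rank C₀.card)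
      (SyzygyComplex.degree fun k => (cliqueCovers H C₀ k).card)
      (fun k => ∏ v ∈ cliqueCovers H C₀ k, X v)
      (SyzygyComplex.differential (fun i => X (C₀.equivFin.symm i))
        fun i => ∏ v ∈ insert ↑(C₀.equivFin.symm i) (H.neighborFinset (C₀.equivFin.symm i)) \ C₀,
          X v) := by
  have hsub (a : Fin n) (ha : a ∈ C₀) : C₀ ⊆ insert a (H.neighborFinset a) :=
    Finset.subset_insert_iff.2 (hclique.erase_subset_neighborFinset ha)
  have hmem := coe_equivFin_symm_mem_cliqueCovers_iff hclique
  refine SyzygyComplex.isMinimalGradedFreeResolution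
    (coverIdeal_eq_span_cliqueCovers hclique hcover).symm (fun k => isHomogeneous_prod_X _)
    (Finset.card_pos.2 hne).ne' (fun i => hdeg _ (C₀.equivFin.symm i).2)
    (fun i => isHomogeneous_X K _) (fun i => ?_) (Finset.prod_ne_zero_iff.2 fun v _ => X_ne_zero v)
    (fun i => ?_) (fun i => X_prime) (fun i k hk => X_dvd_prod_X_iff.2 ((hmem i k).2 hk))
    (fun i => X_dvd_prod_X_iff.not.2 fun h => (hmem i _).1 h rfl)
  · have hcard := Finset.card_sdiff_of_subset (hsub _ (C₀.equivFin.symm i).2)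
    rw [Finset.card_insert_of_notMem (SimpleGraph.notMem_neighborFinset_self _ _)] at hcard
    exact hcard ▸ isHomogeneous_prod_X _
  · rw [cliqueCovers_zero, cliqueCovers_succ, Finset.prod_sdiff (hsub _ (C₀.equivFin.symm i).2),
      Finset.prod_insert (SimpleGraph.notMem_neighborFinset_self _ _)]

theorem exists_resolution_coverIdeal_of_isClique (hclique : H.IsClique (C₀ : Set (Fin n)))
    (hcover : IsVertexCover H C₀) (hne : C₀.Nonempty) (hdeg : ∀ a ∈ C₀, C₀.card ≤ H.degree a) :
    ∃ (rk : ℕ → ℕ) (dgr : ∀ j : ℕ, Fin (rk j) → ℕ)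
      (g : Fin (rk 0) → MvPolynomial (Fin n) K)
      (M : ∀ j : ℕ, Matrix (Fin (rk j)) (Fin (rk (j + 1))) (MvPolynomial (Fin n) K)),
      IsMinimalGradedFreeResolution (coverIdeal K H) rk dgr g M ∧
      (∃ p : ℕ, ∀ j : ℕ, p ≤ j → rk j = 0) ∧
      (∀ (j : ℕ) (i : Fin (rk j)), dgr j i ≤ (j + 1) + (C₀.sup (fun a => H.degree a) - 1)) ∧
      ∃ (j : ℕ) (i : Fin (rk j)), dgr j i = (j + 1) + (C₀.sup (fun a => H.degree a) - 1) := by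
  have hle_sup (a : Fin n) (ha : a ∈ C₀) : H.degree a ≤ C₀.sup (fun a => H.degree a) :=
    Finset.le_sup (f := fun a => H.degree a) ha
  have hcard_le : C₀.card ≤ C₀.sup (fun a => H.degree a) := by
    obtain ⟨a, ha⟩ := hne
    exact (hdeg a ha).trans (hle_sup a ha)
  refine ⟨_, _, _, _, isMinimalGradedFreeResolution_cliqueCovers hclique hcover hne hdeg,
    ⟨2, fun j hj => ?_⟩, ?_, ?_⟩
  · obtain ⟨j, rfl⟩ := Nat.exists_eq_add_of_le' hj
    rfl
  · rintro (_ | _ | j) i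
    · refine Fin.cases ?_ (fun i => ?_) i
      · simp only [SyzygyComplex.degree, cliqueCovers_zero]
        omega
      · have := hle_sup _ (C₀.equivFin.symm i).2
        simp only [SyzygyComplex.degree, cliqueCovers_succ,
          SimpleGraph.card_neighborFinset_eq_degree]
        omega
    · have := hle_sup _ (C₀.equivFin.symm i).2
      simp only [SyzygyComplex.degree, cliqueCovers_succ, SimpleGraph.card_neighborFinset_eq_degree]
      omega
    · exact i.elim0
  · obtain ⟨a, ha, hmax⟩ := Finset.exists_mem_eq_sup C₀ hne (fun a => H.degree a)
    refine ⟨1, C₀.equivFin ⟨a, ha⟩, ?_⟩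
    change (cliqueCovers H C₀ (C₀.equivFin ⟨a, ha⟩).succ).card + 1 = _
    rw [cliqueCovers_succ, Equiv.symm_apply_apply, SimpleGraph.card_neighborFinset_eq_degree,
      ← hmax]
    have := Finset.card_pos.2 hne
    omega

end CliqueCover

section StarClique

variable {V : Type*} {A : Finset V} {f : V → V} {H : SimpleGraph V}

def IsCliqueWithStars (H : SimpleGraph V) (A : Finset V) (f : V → V) : Prop :=
  ∀ u v, H.Adj u v ↔ (u ∈ A ∧ v ∈ A ∧ u ≠ v) ∨ (u ∉ A ∧ v = f u) ∨ (v ∉ A ∧ u = f v)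

namespace IsCliqueWithStars

theorem isClique (hH : IsCliqueWithStars H A f) : H.IsClique (A : Set V) :=
  fun u hu v hv huv => (hH u v).2 (Or.inl ⟨hu, hv, huv⟩)

variable (hf : ∀ v, v ∉ A → f v ∈ A)
include hf

theorem isVertexCover (hH : IsCliqueWithStars H A f) : IsVertexCover H A := by
  intro u v huv
  rcases (hH u v).1 huv with ⟨hu, -, -⟩ | ⟨hu, rfl⟩ | ⟨hv, rfl⟩
  · exact Or.inl hu
  · exact Or.inr (hf u hu)
  · exact Or.inl (hf v hv)

theorem neighborSet_subset (hH : IsCliqueWithStars H A f) {s : V}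
    (hs : ∀ v, v ∉ A → f v ≠ s) : H.neighborSet s ⊆ A := by
  intro w hw
  rcases (hH s w).1 hw with ⟨-, hwA, -⟩ | ⟨hsA, rfl⟩ | ⟨hwA, rfl⟩
  · exact hwA
  · exact hf s hsA
  · exact absurd rfl (hs w hwA)

theorem exists_clique_cover [Fintype V] [DecidableEq V] [DecidableRel H.Adj]
    (hH : IsCliqueWithStars H A f) (hA : A.card < Fintype.card V) :
    ∃ C₀ ⊆ A, IsVertexCover H C₀ ∧ C₀.Nonempty ∧ (∀ a ∈ C₀, C₀.card ≤ H.degree a) ∧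
      C₀.sup (fun a => H.degree a) = A.sup (fun a => H.degree a) := by
  obtain ⟨v₀, -, hv₀⟩ := Finset.exists_mem_notMem_of_card_lt_card (t := Finset.univ) hA
  have hleaf (v : V) (hv : v ∉ A) : A.card ≤ H.degree (f v) :=
    hH.isClique.card_le_degree_of_adj (hf v hv) hv ((hH _ _).2 (Or.inr (Or.inr ⟨hv, rfl⟩)))
  by_cases hs : ∃ s ∈ A, ∀ v, v ∉ A → f v ≠ s
  · obtain ⟨s, hsA, hs⟩ := hs
    have hv₀s : f v₀ ∈ A.erase s := Finset.mem_erase.2 ⟨hs v₀ hv₀, hf v₀ hv₀⟩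
    have hcard (a : V) (ha : a ∈ A) : (A.erase s).card = (A.erase a).card := by
      rw [Finset.card_erase_of_mem hsA, Finset.card_erase_of_mem ha]
    have hdeg_s : H.degree s ≤ (A.erase s).card := by
      refine Finset.card_le_card fun w hw => Finset.mem_erase.2 ⟨?_, ?_⟩
      · exact ((H.mem_neighborFinset _ _).1 hw).ne'
      · exact hH.neighborSet_subset hf hs ((H.mem_neighborFinset _ _).1 hw)
    refine ⟨A.erase s, Finset.erase_subset s A, ?_, ⟨_, hv₀s⟩, fun a ha => ?_, ?_⟩
    · rw [Finset.coe_erase]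
      exact (hH.isVertexCover hf).diff_singleton (hH.neighborSet_subset hf hs)
    · rw [hcard a (Finset.mem_of_mem_erase ha)]
      exact hH.isClique.card_erase_le_degree (Finset.mem_of_mem_erase ha)
    · conv_rhs => rw [← Finset.insert_erase hsA]
      refine (Finset.sup_insert.trans (sup_eq_right.2 ?_)).symm
      calc H.degree s ≤ (A.erase s).card := hdeg_s
        _ ≤ A.card := Finset.card_erase_le
        _ ≤ H.degree (f v₀) := hleaf v₀ hv₀
        _ ≤ (A.erase s).sup fun a => H.degree a := Finset.le_sup (f := fun a => H.degree a) hv₀s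
  · push Not at hs
    refine ⟨A, subset_rfl, hH.isVertexCover hf, ⟨_, hf v₀ hv₀⟩, fun a ha => ?_, rfl⟩
    obtain ⟨v, hv, rfl⟩ := hs a ha
    exact hleaf v hv

end IsCliqueWithStars

end StarClique

/-- For the graph `H` (complete graph on `A`, `|A| = m < n`, with stars centered at the
vertices of `A`, the leaves being exactly the vertices outside `A`), the
Castelnuovo–Mumford regularity of `R/I_c(H)` equals `max_{a ∈ A} deg_H(a) - 1`:
in the (finite) minimal graded free resolution `⋯ → F₂ → F₁ → R → R/I_c(H) → 0`,
every generator of `F_{j+1}` has internal degree at most `(j + 1) + (max deg - 1)`,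
and (unless the regularity is `0`, attained by `F₀ = R`) some generator attains the bound. -/
theorem regularity_quotient_coverIdeal
    (n m : ℕ) (hmn : m < n) (K : Type*) [Field K]
    (A : Finset (Fin n)) (hA : A.card = m)
    (f : Fin n → Fin n) (hf : ∀ v : Fin n, v ∉ A → f v ∈ A)
    (H : SimpleGraph (Fin n))
    (hH : ∀ u v : Fin n, H.Adj u v ↔
      (u ∈ A ∧ v ∈ A ∧ u ≠ v) ∨ (u ∉ A ∧ v = f u) ∨ (v ∉ A ∧ u = f v)) :
    ∃ (rk : ℕ → ℕ) (dgr : ∀ j : ℕ, Fin (rk j) → ℕ)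
      (g : Fin (rk 0) → MvPolynomial (Fin n) K)
      (M : ∀ j : ℕ, Matrix (Fin (rk j)) (Fin (rk (j + 1))) (MvPolynomial (Fin n) K)),
      IsMinimalGradedFreeResolution (coverIdeal K H) rk dgr g M ∧
      (∃ p : ℕ, ∀ j : ℕ, p ≤ j → rk j = 0) ∧
      (∀ (j : ℕ) (i : Fin (rk j)),
        dgr j i ≤ (j + 1) + (A.sup (fun a => Set.ncard {w : Fin n | H.Adj a w}) - 1)) ∧
      (A.sup (fun a => Set.ncard {w : Fin n | H.Adj a w}) - 1 = 0 ∨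
        ∃ (j : ℕ) (i : Fin (rk j)),
          dgr j i = (j + 1) + (A.sup (fun a => Set.ncard {w : Fin n | H.Adj a w}) - 1)) := by
  classical
  have hH' : IsCliqueWithStars H A f := hH
  obtain ⟨C₀, hC₀A, hcover, hne, hdeg, hsup⟩ :=
    hH'.exists_clique_cover hf (by rwa [Fintype.card_fin, hA])
  obtain ⟨rk, dgr, g, M, hres, hfin, hbound, hattained⟩ :=
    exists_resolution_coverIdeal_of_isClique (K := K) (hH'.isClique.subset hC₀A) hcover hne hdeg
  have hdegree (a : Fin n) : Set.ncard {w | H.Adj a w} = H.degree a :=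
    H.ncard_neighborSet_eq_degree a
  simp only [hdegree, ← hsup]
  exact ⟨rk, dgr, g, M, hres, hfin, hbound, Or.inr hattained⟩
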